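/- Let A_i ⊆ R^n (i = 1,...,n) be compact strictly convex sets with nonempty interior (i.e., every supporting hyperplane meets A_i in a single point), and f_i: R^n × S^n → R continuous. Then the map ψ = (ψ_1,...,ψ_n): S^n → R^n, where ψ_i(u) = max_{x ∈ A_i ∩ H_u^+} f_i(x,u) − min_{x ∈ A_i ∩ H_u^+} f_i(x,u) if A_i ∩ H_u^+ ≠ ∅ and ψ_i(u) = 0 otherwise, is continuous on all of S^n. -/

import Mathlib

open Filter Topology

/-- The closed upper half-space `H_u^+`. -/
def Hplus (n : ℕ) (u : EuclideanSpace ℝ (Fin (n + 1))) : Set (EuclideanSpace ℝ (Fin n)) :=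
  {x | (∑ i : Fin n, u (Fin.castSucc i) * x i) ≥ u (Fin.last n)}

open Classical in
/-- The optimal-value function `ψ_i`. -/
noncomputable def psi (n : ℕ) (A : Set (EuclideanSpace ℝ (Fin n)))
    (f : EuclideanSpace ℝ (Fin n) → EuclideanSpace ℝ (Fin (n + 1)) → ℝ)
    (u : EuclideanSpace ℝ (Fin (n + 1))) : ℝ :=
  if (A ∩ Hplus n u).Nonempty then
    sSup ((fun x => f x u) '' (A ∩ Hplus n u)) - sInf ((fun x => f x u) '' (A ∩ Hplus n u))
  else 0

/-!
`ψ_i(u)` is the oscillation of `f_i(·, u)` over the compact set `K(u) = A_i ∩ H_u^+`, i.e. the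
maximum of `f_i(x, u) - f_i(y, u)` over `x, y ∈ K(u)`. The graph of `u ↦ K(u)` is closed and
`A_i` is compact, so by the tube lemma this maximum is upper semicontinuous. For lower
semicontinuity at `u₀ ≠ 0` there are two cases. If some point of `A_i` lies strictly inside
`H_{u₀}^+`, convexity makes such points dense in `K(u₀)`, and each of them stays in `K(u)` for
`u` near `u₀`. Otherwise `K(u₀)` lies in the hyperplane `⟨u₀', x⟩ = u₀_{n+1}`, which supports
`A_i`, so `K(u₀)` has at most one point by strict convexity (if `u₀' = 0`, then `u₀ ≠ 0` forces
`K(u₀) = ∅`), and `ψ_i(u₀) = 0` is a minimum of `ψ_i`.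
-/

open Set

section Oscillation

variable {X : Type*} {φ : X → ℝ} {K : Set X}

-- `psi n A g u` is, by definition, `oscOn (g · u) (A ∩ Hplus n u)`.
open Classical in
noncomputable def oscOn (φ : X → ℝ) (K : Set X) : ℝ :=
  if K.Nonempty then sSup (φ '' K) - sInf (φ '' K) else 0

theorem oscOn_of_subsingleton (hK : K.Subsingleton) : oscOn φ K = 0 := by
  rcases hK.eq_empty_or_singleton with rfl | ⟨x, rfl⟩ <;> simp [oscOn]

variable [TopologicalSpace X]

theorem isGreatest_oscOn (hK : IsCompact K) (hne : K.Nonempty)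
    (hφ : ContinuousOn φ K) :
    IsGreatest ((fun p : X × X => φ p.1 - φ p.2) '' K ×ˢ K) (oscOn φ K) := by
  have himg : IsCompact (φ '' K) := hK.image_of_continuousOn hφ
  obtain ⟨a, ha, hsup⟩ := himg.sSup_mem (hne.image φ)
  obtain ⟨b, hb, hinf⟩ := himg.sInf_mem (hne.image φ)
  refine ⟨⟨(a, b), ⟨ha, hb⟩, by simp [oscOn, if_pos hne, hsup, hinf]⟩, ?_⟩
  rintro _ ⟨⟨x, y⟩, ⟨hx, hy⟩, rfl⟩
  rw [oscOn, if_pos hne]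
  exact sub_le_sub (le_csSup himg.bddAbove (mem_image_of_mem φ hx))
    (csInf_le himg.bddBelow (mem_image_of_mem φ hy))

theorem oscOn_lt_iff (hK : IsCompact K) (hφ : ContinuousOn φ K) {c : ℝ} :
    oscOn φ K < c ↔ 0 < c ∧ ∀ x ∈ K, ∀ y ∈ K, φ x - φ y < c := by
  rcases K.eq_empty_or_nonempty with rfl | hne
  · simp [oscOn]
  rw [(isGreatest_oscOn hK hne hφ).lt_iff, forall_mem_image]
  obtain ⟨x, hx⟩ := hne
  exact ⟨fun h => ⟨by simpa using h (mk_mem_prod hx hx), fun x hx y hy => h (mk_mem_prod hx hy)⟩,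
    fun h p hp => h.2 p.1 hp.1 p.2 hp.2⟩

theorem oscOn_nonneg (hK : IsCompact K) (hφ : ContinuousOn φ K) :
    0 ≤ oscOn φ K :=
  not_lt.1 fun h => lt_irrefl _ ((oscOn_lt_iff hK hφ).1 h).1

theorem lt_oscOn_iff (hK : IsCompact K) (hφ : ContinuousOn φ K) {c : ℝ} :
    c < oscOn φ K ↔ c < 0 ∨ ∃ x ∈ K, ∃ y ∈ K, c < φ x - φ y := by
  rcases K.eq_empty_or_nonempty with rfl | hne
  · simp [oscOn]
  rw [lt_isLUB_iff (isGreatest_oscOn hK hne hφ).isLUB]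
  obtain ⟨x, hx⟩ := hne
  simp only [exists_mem_image, mem_prod, Prod.exists]
  constructor
  · rintro ⟨a, b, ⟨ha, hb⟩, h⟩
    exact Or.inr ⟨a, ha, b, hb, h⟩
  · rintro (h | ⟨a, ha, b, hb, h⟩)
    · exact ⟨x, x, ⟨hx, hx⟩, by simpa using h⟩
    · exact ⟨a, b, ⟨ha, hb⟩, h⟩

end Oscillation

section Semicontinuity

variable {X U : Type*} [TopologicalSpace X] [TopologicalSpace U] {A : Set X} {H : U → Set X}
  {g : X → U → ℝ} {u₀ : U} {c : ℝ}

theorem isCompact_inter_of_isClosed_graph (hA : IsCompact A)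
    (hH : IsClosed {p : X × U | p.1 ∈ H p.2}) (u : U) : IsCompact (A ∩ H u) :=
  hA.inter_right (hH.preimage (Continuous.prodMk_left u))

theorem eventually_oscOn_lt (hA : IsCompact A) (hH : IsClosed {p : X × U | p.1 ∈ H p.2})
    (hg : Continuous fun p : X × U => g p.1 p.2)
    (hc : oscOn (g · u₀) (A ∩ H u₀) < c) :
    ∀ᶠ u in 𝓝 u₀, oscOn (g · u) (A ∩ H u) < c := by
  have hK := isCompact_inter_of_isClosed_graph hA hH
  have hgu : ∀ u, ContinuousOn (g · u) (A ∩ H u) := fun u =>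
    (hg.comp (Continuous.prodMk_left u)).continuousOn
  rw [oscOn_lt_iff (hK u₀) (hgu u₀)] at hc
  obtain ⟨hc0, hxy⟩ := hc
  have hc₁ : Continuous fun q : U × X × X => (q.2.1, q.1) := by fun_prop
  have hc₂ : Continuous fun q : U × X × X => (q.2.2, q.1) := by fun_prop
  have hlt : IsOpen {q : U × X × X | g q.2.1 q.1 - g q.2.2 q.1 < c} :=
    isOpen_lt ((hg.comp hc₁).sub (hg.comp hc₂)) continuous_const
  have hopen : IsOpen {q : U × X × X | q.2.1 ∈ H q.1 → q.2.2 ∈ H q.1 →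
      g q.2.1 q.1 - g q.2.2 q.1 < c} := by
    convert (hH.preimage hc₁).isOpen_compl.union ((hH.preimage hc₂).isOpen_compl.union hlt) using 1
    ext q
    simp only [mem_ofPred_eq, mem_union, mem_compl_iff, mem_preimage]
    tauto
  filter_upwards [(hA.prod hA).eventually_forall_of_forall_eventually
    (P := fun u (p : X × X) => p.1 ∈ H u → p.2 ∈ H u → g p.1 u - g p.2 u < c) fun p hp =>
    hopen.mem_nhds (x := (u₀, p)) fun hx hy => hxy p.1 ⟨hp.1, hx⟩ p.2 ⟨hp.2, hy⟩] with u hu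
  exact (oscOn_lt_iff (hK u) (hgu u)).2
    ⟨hc0, fun x hx y hy => hu (x, y) ⟨hx.1, hy.1⟩ hx.2 hy.2⟩

theorem eventually_lt_oscOn (hA : IsCompact A) (hH : IsClosed {p : X × U | p.1 ∈ H p.2})
    (hg : Continuous fun p : X × U => g p.1 p.2)
    (hdense : A ∩ H u₀ ⊆ closure {x ∈ A | ∀ᶠ u in 𝓝 u₀, x ∈ H u})
    (hc : c < oscOn (g · u₀) (A ∩ H u₀)) :
    ∀ᶠ u in 𝓝 u₀, c < oscOn (g · u) (A ∩ H u) := by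
  have hK := isCompact_inter_of_isClosed_graph hA hH
  have hgu : ∀ u, ContinuousOn (g · u) (A ∩ H u) := fun u =>
    (hg.comp (Continuous.prodMk_left u)).continuousOn
  simp_rw [lt_oscOn_iff (hK _) (hgu _)] at hc ⊢
  obtain hc | ⟨x, hx, y, hy, hxy⟩ := hc
  · exact Eventually.of_forall fun _ => Or.inl hc
  have hopen : IsOpen {p : X × X | c < g p.1 u₀ - g p.2 u₀} :=
    isOpen_lt continuous_const ((hg.comp (continuous_fst.prodMk continuous_const)).sub
      (hg.comp (continuous_snd.prodMk continuous_const)))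
  set I := {x ∈ A | ∀ᶠ u in 𝓝 u₀, x ∈ H u}
  have hxy_mem : (x, y) ∈ closure (I ×ˢ I) := by
    rw [closure_prod_eq]
    exact ⟨hdense hx, hdense hy⟩
  obtain ⟨⟨x', y'⟩, hx'y', ⟨hx'A, hx'⟩, ⟨hy'A, hy'⟩⟩ := mem_closure_iff.1 hxy_mem _ hopen hxy
  have hgx : ∀ x, Continuous (g x) := fun x => hg.comp (Continuous.prodMk_right x)
  filter_upwards [hx', hy', ((hgx x').sub (hgx y')).continuousAt.eventually_const_lt hx'y']
    with u hx'u hy'u hu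
  exact Or.inr ⟨x', ⟨hx'A, hx'u⟩, y', ⟨hy'A, hy'u⟩, hu⟩

theorem continuousAt_oscOn (hA : IsCompact A) (hH : IsClosed {p : X × U | p.1 ∈ H p.2})
    (hg : Continuous fun p : X × U => g p.1 p.2)
    (hfibre : (A ∩ H u₀).Subsingleton ∨ A ∩ H u₀ ⊆ closure {x ∈ A | ∀ᶠ u in 𝓝 u₀, x ∈ H u}) :
    ContinuousAt (fun u => oscOn (g · u) (A ∩ H u)) u₀ := by
  refine tendsto_order.2
    ⟨fun c (hc : c < oscOn (g · u₀) (A ∩ H u₀)) => ?_, fun c hc => eventually_oscOn_lt hA hH hg hc⟩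
  obtain hsub | hdense := hfibre
  · rw [oscOn_of_subsingleton hsub] at hc
    exact Eventually.of_forall fun u => hc.trans_le (oscOn_nonneg
      (isCompact_inter_of_isClosed_graph hA hH u) (hg.comp (Continuous.prodMk_left u)).continuousOn)
  · exact eventually_lt_oscOn hA hH hg hdense hc

end Semicontinuity

theorem Convex.subset_closure_inter_lt {E : Type*} [AddCommGroup E] [Module ℝ E]
    [TopologicalSpace E] [ContinuousAdd E] [ContinuousSMul ℝ E] {A : Set E} (hA : Convex ℝ A)
    (ℓ : E →ₗ[ℝ] ℝ) {c : ℝ} {z : E} (hz : z ∈ A) (hzc : c < ℓ z) :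
    A ∩ {x | c ≤ ℓ x} ⊆ closure (A ∩ {x | c < ℓ x}) := by
  rintro x ⟨hx, hxc : c ≤ ℓ x⟩
  refine closure_mono (subset_inter (hA.openSegment_subset hx hz) ?_)
    (segment_subset_closure_openSegment (left_mem_segment ℝ x z))
  rintro _ ⟨a, b, ha, hb, hab, rfl⟩
  simp only [mem_ofPred_eq, map_add, map_smul, smul_eq_mul]
  have hc : c = a * c + b * c := by rw [← add_mul, hab, one_mul]
  linarith [mul_le_mul_of_nonneg_left hxc ha.le, mul_lt_mul_of_pos_left hzc hb]

section Halfspace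

variable {n : ℕ} {A : Set (EuclideanSpace ℝ (Fin n))} {u : EuclideanSpace ℝ (Fin (n + 1))}

-- The vector `u'` of the first `n` coordinates of `u`.
def hplusNormal (n : ℕ) (u : EuclideanSpace ℝ (Fin (n + 1))) : EuclideanSpace ℝ (Fin n) :=
  WithLp.toLp 2 fun i => u (Fin.castSucc i)

theorem inner_eq_sum_mul (v x : EuclideanSpace ℝ (Fin n)) :
    inner ℝ v x = ∑ i, v i * x i := by
  simp [PiLp.inner_apply, mul_comm]

theorem mem_Hplus_iff {x : EuclideanSpace ℝ (Fin n)} :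
    x ∈ Hplus n u ↔ u (Fin.last n) ≤ inner ℝ (hplusNormal n u) x := by
  simp [Hplus, inner_eq_sum_mul, hplusNormal]

theorem continuous_hplusNormal (n : ℕ) : Continuous (hplusNormal n) := by
  unfold hplusNormal
  fun_prop

theorem isClosed_setOf_mem_Hplus (n : ℕ) :
    IsClosed {p : EuclideanSpace ℝ (Fin n) × EuclideanSpace ℝ (Fin (n + 1)) |
      p.1 ∈ Hplus n p.2} := by
  simp only [mem_Hplus_iff]
  exact isClosed_le (by fun_prop) (continuous_inner.comp
    (((continuous_hplusNormal n).comp continuous_snd).prodMk continuous_fst))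

theorem hplusNormal_eq_zero (h : hplusNormal n u = 0) (hlast : u (Fin.last n) = 0) : u = 0 := by
  ext i
  induction i using Fin.lastCases with
  | last => exact hlast
  | cast i => simpa [hplusNormal] using congrArg (· i) h

theorem subsingleton_inter_Hplus (hstrict : ∀ (v : EuclideanSpace ℝ (Fin n)) (c : ℝ), v ≠ 0 →
      (∀ y ∈ A, (∑ j : Fin n, v j * y j) ≤ c) →
      ({y ∈ A | (∑ j : Fin n, v j * y j) = c}).Subsingleton) (hu : u ≠ 0)
    (hsupp : ∀ y ∈ A, inner ℝ (hplusNormal n u) y ≤ u (Fin.last n)) :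
    (A ∩ Hplus n u).Subsingleton := by
  simp only [inner_eq_sum_mul] at hsupp
  have hK : A ∩ Hplus n u ⊆ {y ∈ A | ∑ j, hplusNormal n u j * y j = u (Fin.last n)} := by
    rintro y ⟨hy, hyH⟩
    rw [mem_Hplus_iff, inner_eq_sum_mul] at hyH
    exact ⟨hy, le_antisymm (hsupp y hy) hyH⟩
  by_cases h0 : hplusNormal n u = 0
  · rintro y hy
    refine absurd (hplusNormal_eq_zero h0 ?_) hu
    simpa [h0] using (hK hy).2.symm
  · exact (hstrict _ _ h0 hsupp).anti hK

theorem inter_Hplus_subset_closure (hconv : Convex ℝ A) {z : EuclideanSpace ℝ (Fin n)}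
    (hzA : z ∈ A) (hz : u (Fin.last n) < inner ℝ (hplusNormal n u) z) :
    A ∩ Hplus n u ⊆ closure {x ∈ A | ∀ᶠ v in 𝓝 u, x ∈ Hplus n v} := by
  have hsub := hconv.subset_closure_inter_lt (innerₛₗ ℝ (hplusNormal n u)) hzA hz
  simp only [innerₛₗ_apply_apply] at hsub
  refine fun x hx => closure_mono ?_ (hsub ⟨hx.1, mem_Hplus_iff.1 hx.2⟩)
  rintro y ⟨hyA, hy⟩
  refine ⟨hyA, ?_⟩
  have hcont : Continuous fun v : EuclideanSpace ℝ (Fin (n + 1)) => inner ℝ (hplusNormal n v) y :=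
    (continuous_hplusNormal n).inner continuous_const
  filter_upwards [(EuclideanSpace.proj (Fin.last n)).continuous.continuousAt.eventually_lt
    hcont.continuousAt hy] with v hv
  exact mem_Hplus_iff.2 hv.le

theorem continuousAt_psi (hcomp : IsCompact A) (hconv : Convex ℝ A)
    (hstrict : ∀ (v : EuclideanSpace ℝ (Fin n)) (c : ℝ), v ≠ 0 →
      (∀ y ∈ A, (∑ j : Fin n, v j * y j) ≤ c) →
      ({y ∈ A | (∑ j : Fin n, v j * y j) = c}).Subsingleton)
    {g : EuclideanSpace ℝ (Fin n) → EuclideanSpace ℝ (Fin (n + 1)) → ℝ}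
    (hg : Continuous fun p : EuclideanSpace ℝ (Fin n) × EuclideanSpace ℝ (Fin (n + 1)) =>
      g p.1 p.2)
    {u₀ : EuclideanSpace ℝ (Fin (n + 1))} (hu₀ : u₀ ≠ 0) :
    ContinuousAt (psi n A g) u₀ := by
  refine continuousAt_oscOn hcomp (isClosed_setOf_mem_Hplus n) hg ?_
  by_cases hin : ∃ z ∈ A, u₀ (Fin.last n) < inner ℝ (hplusNormal n u₀) z
  · obtain ⟨z, hzA, hz⟩ := hin
    exact Or.inr (inter_Hplus_subset_closure hconv hzA hz)
  · push Not at hin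
    exact Or.inl (subsingleton_inter_Hplus hstrict hu₀ hin)

end Halfspace

theorem psi_continuous_general (n : ℕ) (A : Fin n → Set (EuclideanSpace ℝ (Fin n)))
    (hcomp : ∀ i, IsCompact (A i)) (hconv : ∀ i, Convex ℝ (A i))
    -- strict convexity: every supporting hyperplane meets `A i` in at most one point
    (hstrict : ∀ i (v : EuclideanSpace ℝ (Fin n)) (c : ℝ), v ≠ 0 →
      (∀ y ∈ A i, (∑ j : Fin n, v j * y j) ≤ c) →
      ({y ∈ A i | (∑ j : Fin n, v j * y j) = c}).Subsingleton)
    (f : Fin n → EuclideanSpace ℝ (Fin n) → EuclideanSpace ℝ (Fin (n + 1)) → ℝ)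
    (hf : ∀ i, Continuous fun p : EuclideanSpace ℝ (Fin n) × EuclideanSpace ℝ (Fin (n + 1)) =>
      f i p.1 p.2) :
    ContinuousOn (fun u (i : Fin n) => psi n (A i) (f i) u)
      (Metric.sphere (0 : EuclideanSpace ℝ (Fin (n + 1))) 1) :=
  continuousOn_pi.2 fun i _ hu =>
    (continuousAt_psi (hcomp i) (hconv i) (hstrict i) (hf i)
      (Metric.ne_of_mem_sphere hu one_ne_zero)).continuousWithinAt

theorem psi_continuous (n : ℕ) (A : Fin n → Set (EuclideanSpace ℝ (Fin n)))
    (hne : ∀ i, (A i).Nonempty) (hcomp : ∀ i, IsCompact (A i)) (hconv : ∀ i, Convex ℝ (A i))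
    (hint : ∀ i, (interior (A i)).Nonempty)
    -- strict convexity: every supporting hyperplane meets `A i` in at most one point
    (hstrict : ∀ i (v : EuclideanSpace ℝ (Fin n)) (c : ℝ), v ≠ 0 →
      (∀ y ∈ A i, (∑ j : Fin n, v j * y j) ≤ c) →
      ({y ∈ A i | (∑ j : Fin n, v j * y j) = c}).Subsingleton)
    (f : Fin n → EuclideanSpace ℝ (Fin n) → EuclideanSpace ℝ (Fin (n + 1)) → ℝ)
    (hf : ∀ i, Continuous fun p : EuclideanSpace ℝ (Fin n) × EuclideanSpace ℝ (Fin (n + 1)) =>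
      f i p.1 p.2) :
    ContinuousOn (fun u (i : Fin n) => psi n (A i) (f i) u)
      (Metric.sphere (0 : EuclideanSpace ℝ (Fin (n + 1))) 1) :=
  psi_continuous_general n A hcomp hconv hstrict f hf
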